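/- arXiv:2104.01382 — 2 statements merged into one kernel-verified Lean document; each statement's English description precedes it below -/
import Mathlib

section
/- If a graph contains no cycle of even length, then every block of the graph is either an odd cycle, a single edge, or an isolated vertex. -/
/-!
A graph without cut vertices and with at least three vertices contains a cycle `C`. If some edge
at a vertex of `C` were not an edge of `C`, it would be a chord of `C` or the start of an ear of
`C` (a path leaving `C` and returning to it elsewhere, which exists because no vertex separates).
Either way there are three internally disjoint paths between two vertices of `C`; the three
cycles formed by pairs of them have total length `2 (|p| + |q| + |r|)`, so one of them is even.
Hence, in a block without even cycles, `C` passes through every vertex and every edge.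
-/

/-- A block of `G`: a maximal connected subgraph without a cut-vertex. -/
def IsBlock {V : Type*} (G : SimpleGraph V) (H : G.Subgraph) : Prop :=
  H.Connected ∧ (∀ v ∈ H.verts, ((H.deleteVerts {v}).coe).Preconnected) ∧
    ∀ H' : G.Subgraph, H ≤ H' → H'.Connected →
      (∀ v ∈ H'.verts, ((H'.deleteVerts {v}).coe).Preconnected) → H' = H

namespace SimpleGraph

variable {V : Type*} {G : SimpleGraph V}

/-- `G - v` is preconnected for every vertex `v`. -/
def NoCutVertex (G : SimpleGraph V) : Prop :=
  ∀ ⦃v a b : V⦄, a ≠ v → b ≠ v → ∃ p : G.Walk a b, v ∉ p.support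

namespace Walk

def InternallyDisjoint {u v : V} (p q : G.Walk u v) : Prop :=
  ∀ x ∈ p.support, x ∈ q.support → x = u ∨ x = v

lemma mem_edges_of_length_eq_one {u v : V} :
    ∀ {p : G.Walk u v}, p.length = 1 → s(u, v) ∈ p.edges
  | nil, h => by simp at h
  | cons _ nil, _ => by simp
  | cons _ (cons _ _), h => by simp at h

lemma IsPath.start_notMem_tail_support {u v : V} {p : G.Walk u v} (hp : p.IsPath) :
    u ∉ p.support.tail :=
  (List.nodup_cons.mp (p.cons_tail_support ▸ hp.support_nodup)).1

lemma IsPath.isCycle_append_reverse {u v : V} {p q : G.Walk u v} (hp : p.IsPath)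
    (hq : q.IsPath) (hpq : p.InternallyDisjoint q) (hn : 1 < p.length ∨ 1 < q.length) :
    (p.append q.reverse).IsCycle := by
  refine hp.isCycle_append hq.reverse (fun x hxp hxq => ?_) (by simpa using hn)
  have hxq' : x ∈ q.support := by
    simpa using List.mem_of_mem_tail hxq
  rcases hpq x (List.mem_of_mem_tail hxp) hxq' with rfl | rfl
  · exact hp.start_notMem_tail_support hxp
  · exact hq.reverse.start_notMem_tail_support hxq

theorem exists_even_isCycle_of_three_paths {u v : V} {p q r : G.Walk u v}
    (hp : p.IsPath) (hq : q.IsPath) (hr : r.IsPath) (hpq : p.InternallyDisjoint q)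
    (hpr : p.InternallyDisjoint r) (hqr : q.InternallyDisjoint r)
    (hpq₁ : 1 < p.length ∨ 1 < q.length) (hpr₁ : 1 < p.length ∨ 1 < r.length)
    (hqr₁ : 1 < q.length ∨ 1 < r.length) :
    ∃ (w : V) (c : G.Walk w w), c.IsCycle ∧ Even c.length := by
  by_contra! hodd
  have h₁ := hodd _ _ (hp.isCycle_append_reverse hq hpq hpq₁)
  have h₂ := hodd _ _ (hp.isCycle_append_reverse hr hpr hpr₁)
  have h₃ := hodd _ _ (hq.isCycle_append_reverse hr hqr hqr₁)
  simp only [length_append, length_reverse, Nat.not_even_iff_odd, Nat.odd_iff] at h₁ h₂ h₃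
  omega

theorem IsCycle.exists_internallyDisjoint_paths {w y z : V} {c : G.Walk w w} (hc : c.IsCycle)
    (hy : y ∈ c.support) (hz : z ∈ c.support) (hyz : y ≠ z) :
    ∃ p q : G.Walk y z, p.IsPath ∧ q.IsPath ∧ p.InternallyDisjoint q ∧
      p.length + q.length = c.length ∧ p.support ⊆ c.support ∧ q.support ⊆ c.support ∧
      p.edges ⊆ c.edges ∧ q.edges ⊆ c.edges := by
  classical
  set c' := c.rotate y hy
  have hc' : c'.IsCycle := hc.rotate hy
  have hz' : z ∈ c'.support := (c.mem_support_rotate_iff y hy).2 hz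
  set p := c'.takeUntil z hz'
  set q := c'.dropUntil z hz'
  have hspec : p.append q = c' := c'.take_spec hz'
  have hp : p.IsPath := hc'.isPath_takeUntil hz'
  have hq : q.IsPath := IsCycle.isPath_of_append_right (not_nil_of_ne hyz) (hspec ▸ hc')
  have htail : p.support.tail.Disjoint q.support.tail := by
    have := hc'.support_nodup
    rw [← hspec, tail_support_append, List.nodup_append'] at this
    exact this.2.2
  have hsub : c'.support ⊆ c.support := fun x hx => (c.mem_support_rotate_iff y hy).1 hx
  have hedges : c'.edges ⊆ c.edges := (c.rotate_edges y hy).perm.subset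
  refine ⟨p, q.reverse, hp, hq.reverse, fun x hxp hxq => ?_, ?_, ?_, ?_, ?_, ?_⟩
  · rw [← p.cons_tail_support, List.mem_cons] at hxp
    rw [support_reverse, List.mem_reverse, ← q.cons_tail_support, List.mem_cons] at hxq
    rcases hxp with rfl | hxp
    · exact .inl rfl
    rcases hxq with rfl | hxq
    · exact .inr rfl
    exact (htail hxp hxq).elim
  · rw [length_reverse, ← length_append, hspec, length_rotate]
  · exact List.Subset.trans (c'.support_takeUntil_subset_support hz') hsub
  · rw [support_reverse]
    exact List.Subset.trans
      (List.reverse_subset.2 (c'.support_dropUntil_subset_support hz')) hsub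
  · exact List.Subset.trans (c'.edges_takeUntil_subset_edges hz') hedges
  · rw [edges_reverse]
    exact List.Subset.trans
      (List.reverse_subset.2 (c'.edges_dropUntil_subset_edges hz')) hedges

theorem exists_isPath_to_first_mem {S : Set V} {u v : V} (p : G.Walk u v) (hu : u ∉ S)
    (hv : v ∈ S) :
    ∃ w ∈ S, ∃ q : G.Walk u w, q.IsPath ∧ q.support ⊆ p.support ∧
      ∀ x ∈ q.support, x ∈ S → x = w := by
  classical
  suffices ∃ w ∈ S, ∃ q : G.Walk u w, q.support ⊆ p.support ∧ ∀ x ∈ q.support, x ∈ S → x = w by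
    obtain ⟨w, hw, q, hqp, hqS⟩ := this
    have hbq := q.support_bypass_subset_support
    exact ⟨w, hw, q.bypass, q.bypass_isPath, List.Subset.trans hbq hqp,
      fun x hx => hqS x (hbq hx)⟩
  induction p with
  | nil => exact absurd hv hu
  | @cons u v' w h p ih =>
    by_cases hv' : v' ∈ S
    · refine ⟨v', hv', h.toWalk, by simp, fun x hx hxS => ?_⟩
      simp only [Adj.toWalk, support_cons, support_nil, List.mem_cons, List.not_mem_nil,
        or_false] at hx
      rcases hx with rfl | rfl
      · exact absurd hxS hu
      · rfl
    · obtain ⟨w, hw, q, hqp, hqS⟩ := ih hv' hv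
      refine ⟨w, hw, cons h q, by simpa using List.cons_subset_cons u hqp, fun x hx hxS => ?_⟩
      rw [support_cons, List.mem_cons] at hx
      rcases hx with rfl | hx
      · exact absurd hxS hu
      · exact hqS x hx hxS

end Walk

open Walk

theorem Preconnected.mem_of_adj_closed {S : Set V} (hG : G.Preconnected)
    (hS : ∀ ⦃a b⦄, G.Adj a b → a ∈ S → b ∈ S) {u : V} (hu : u ∈ S) (v : V) : v ∈ S := by
  by_contra hv
  obtain ⟨p⟩ := hG u v
  obtain ⟨d, -, hd, hd'⟩ := p.exists_boundary_dart S hu hv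
  exact hd' (hS d.adj hd)

theorem Walk.IsCycle.mem_edges_of_adj
    (hno : ¬ ∃ (w : V) (c : G.Walk w w), c.IsCycle ∧ Even c.length)
    {u a b : V} {c : G.Walk u u} (hc : c.IsCycle) (ha : a ∈ c.support) (hb : b ∈ c.support)
    (hab : G.Adj a b) : s(a, b) ∈ c.edges := by
  by_contra habc
  obtain ⟨p, q, hp, hq, hpq, -, -, -, hpc, hqc⟩ :=
    hc.exists_internallyDisjoint_paths ha hb hab.ne
  have hlong : ∀ r : G.Walk a b, r.edges ⊆ c.edges → 1 < r.length := fun r hr => by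
    have h₀ : r.length ≠ 0 := fun h => hab.ne (eq_of_length_eq_zero h)
    have h₁ : r.length ≠ 1 := fun h => habc (hr (mem_edges_of_length_eq_one h))
    omega
  have hchord : ∀ r : G.Walk a b, r.InternallyDisjoint hab.toWalk := fun r x _ hx => by
    simpa using hx
  exact hno (exists_even_isCycle_of_three_paths hp hq hab.isPath_toWalk hpq (hchord p) (hchord q)
    (.inl (hlong p hpc)) (.inl (hlong p hpc)) (.inl (hlong q hqc)))

theorem NoCutVertex.mem_support_of_adj (hcut : G.NoCutVertex)
    (hno : ¬ ∃ (w : V) (c : G.Walk w w), c.IsCycle ∧ Even c.length)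
    {u a b : V} {c : G.Walk u u} (hc : c.IsCycle) (ha : a ∈ c.support) (hab : G.Adj a b) :
    b ∈ c.support := by
  by_contra hb
  obtain ⟨t, ht, hta⟩ : ∃ t ∈ c.support, t ≠ a := by
    by_cases hau : a = u
    · exact ⟨c.snd, c.getVert_mem_support 1, hau ▸ (c.adj_snd hc.not_nil).ne'⟩
    · exact ⟨u, c.start_mem_support, Ne.symm hau⟩
  obtain ⟨W, haW⟩ := hcut hab.ne' hta
  obtain ⟨z, hz, P, hP, hPW, hPc⟩ :=
    W.exists_isPath_to_first_mem (S := {x | x ∈ c.support}) hb ht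
  have haP : a ∉ P.support := fun h => haW (hPW h)
  have hza : z ≠ a := by
    rintro rfl
    exact haP P.end_mem_support
  -- `cons hab P` is an ear of `c` from `a` to `z`, internally disjoint from `c`.
  have hr : (cons hab P).IsPath := (cons_isPath_iff _ _).2 ⟨hP, haP⟩
  have hr₁ : 1 < (cons hab P).length := by
    have : P.length ≠ 0 := fun h => hb (eq_of_length_eq_zero h ▸ hz)
    simp only [length_cons]
    omega
  have hrc : ∀ x ∈ c.support, x ∈ (cons hab P).support → x = a ∨ x = z := by
    intro x hxc hxr
    rw [support_cons, List.mem_cons] at hxr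
    rcases hxr with rfl | hxP
    · exact .inl rfl
    · exact .inr (hPc x hxP hxc)
  obtain ⟨p, q, hp, hq, hpq, hlen, hpc, hqc, -, -⟩ :=
    hc.exists_internallyDisjoint_paths ha hz hza.symm
  have h₃ := hc.three_le_length
  exact hno (exists_even_isCycle_of_three_paths hp hq hr hpq (fun x hx => hrc x (hpc hx))
    (fun x hx => hrc x (hqc hx)) (by omega) (.inr hr₁) (.inr hr₁))

theorem NoCutVertex.exists_isCycle (hcut : G.NoCutVertex) {u v w : V} (huv : G.Adj u v)
    (hwu : w ≠ u) (hwv : w ≠ v) : ∃ (x : V) (c : G.Walk x x), c.IsCycle := by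
  classical
  obtain ⟨p, hup⟩ := hcut huv.ne' hwu
  obtain ⟨q, hvq⟩ := hcut hwv huv.ne
  have hpq : s(u, v) ∉ (p.append q).edges := by
    rw [edges_append, List.mem_append]
    rintro (h | h)
    · exact hup (p.fst_mem_support_of_mem_edges h)
    · exact hvq (q.snd_mem_support_of_mem_edges h)
  exact ⟨u, cons huv (p.append q).bypass, (cons_isCycle_iff _ _).2
    ⟨bypass_isPath _, fun h => hpq (edges_bypass_subset_edges _ h)⟩⟩

theorem NoCutVertex.exists_isCycle_covering (hG : G.Preconnected) (hcut : G.NoCutVertex)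
    (hno : ¬ ∃ (w : V) (c : G.Walk w w), c.IsCycle ∧ Even c.length)
    {u v w : V} (huv : G.Adj u v) (hwu : w ≠ u) (hwv : w ≠ v) :
    ∃ (x : V) (c : G.Walk x x), c.IsCycle ∧ (∀ y, y ∈ c.support) ∧
      ∀ e ∈ G.edgeSet, e ∈ c.edges := by
  obtain ⟨x, c, hc⟩ := hcut.exists_isCycle huv hwu hwv
  have hall : ∀ y, y ∈ c.support := hG.mem_of_adj_closed (S := {y | y ∈ c.support})
    (fun _ _ hab ha => hcut.mem_support_of_adj hno hc ha hab) c.start_mem_support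
  refine ⟨x, c, hc, hall, fun e he => ?_⟩
  induction e using Sym2.ind with
  | _ a b => exact hc.mem_edges_of_adj hno (hall a) (hall b) he

namespace Subgraph

theorem edgeSet_eq_empty_of_subsingleton (H : G.Subgraph) (h : H.verts.Subsingleton) :
    H.edgeSet = ∅ :=
  Set.eq_empty_of_forall_notMem fun e he => by
    induction e using Sym2.ind with
    | _ a b => exact he.ne (h (H.edge_vert he) (H.edge_vert he.symm))

theorem noCutVertex_coe (H : G.Subgraph)
    (h : ∀ v ∈ H.verts, (H.deleteVerts {v}).coe.Preconnected) : H.coe.NoCutVertex := by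
  intro v a b hav hbv
  have hmem : ∀ x : H.verts, x ≠ v → (x : V) ∈ (H.deleteVerts {(v : V)}).verts :=
    fun x hxv => ⟨x.2, fun hx => hxv (Subtype.ext hx)⟩
  obtain ⟨p⟩ := h v v.2 ⟨a, hmem a hav⟩ ⟨b, hmem b hbv⟩
  have hvp : v ∉ (p.map (inclusion deleteVerts_le)).support := by
    rw [Walk.support_map, List.mem_map]
    rintro ⟨x, -, hxv⟩
    exact x.2.2 congr($hxv.1)
  exact ⟨_, hvp⟩

theorem edgeSet_eq_singleton_of_verts_eq_pair (H : G.Subgraph) {u v : V} (huv : H.Adj u v)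
    (h : H.verts = {u, v}) : H.edgeSet = {s(u, v)} := by
  ext e
  induction e using Sym2.ind with
  | _ a b =>
    rw [Subgraph.mem_edgeSet, Set.mem_singleton_iff]
    constructor
    · intro hab
      have ha := H.edge_vert hab
      have hb := H.edge_vert hab.symm
      rw [h] at ha hb
      rcases ha with rfl | rfl <;> rcases hb with rfl | rfl
      all_goals first | exact absurd rfl hab.ne | rfl | exact Sym2.eq_swap
    · rintro he
      rcases Sym2.eq_iff.1 he with ⟨rfl, rfl⟩ | ⟨rfl, rfl⟩
      exacts [huv, huv.symm]

end Subgraph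

end SimpleGraph

open SimpleGraph in
/-- If a graph has no even cycle, then every block is an odd cycle, a single
edge, or an isolated vertex. -/
theorem block_of_no_even_cycle {V : Type*} (G : SimpleGraph V)
    (hno : ¬ ∃ (w : V) (c : G.Walk w w), c.IsCycle ∧ Even c.length)
    (H : G.Subgraph) (hH : IsBlock G H) :
    (∃ v, H.verts = {v} ∧ H.edgeSet = ∅) ∨
    (∃ u v, u ≠ v ∧ H.verts = {u, v} ∧ H.edgeSet = {s(u, v)}) ∨
    (∃ (w : H.verts) (c : H.coe.Walk w w), c.IsCycle ∧ Odd c.length ∧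
      (∀ x, x ∈ c.support) ∧ ∀ e ∈ H.coe.edgeSet, e ∈ c.edges) := by
  obtain ⟨hconn, hcut, -⟩ := hH
  have hnoH : ¬ ∃ (w : H.verts) (c : H.coe.Walk w w), c.IsCycle ∧ Even c.length :=
    fun ⟨w, c, hc, he⟩ => hno ⟨H.hom w, c.map H.hom, hc.map Subgraph.hom_injective,
      by rwa [Walk.length_map]⟩
  obtain ⟨u⟩ := hconn.coe.nonempty
  by_cases hnt : Nontrivial H.verts
  swap
  · have hsub : H.verts.Subsingleton :=
      (Set.subsingleton_coe _).1 (not_nontrivial_iff_subsingleton.1 hnt)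
    exact .inl ⟨u, hsub.eq_singleton_of_mem u.2, H.edgeSet_eq_empty_of_subsingleton hsub⟩
  obtain ⟨v, huv⟩ := hconn.coe.preconnected.exists_adj_of_nontrivial u
  by_cases hw : ∃ w, w ≠ u ∧ w ≠ v
  · obtain ⟨w, hwu, hwv⟩ := hw
    obtain ⟨x, c, hc, hall, hedges⟩ := (H.noCutVertex_coe hcut).exists_isCycle_covering
      hconn.coe.preconnected hnoH huv hwu hwv
    exact .inr <| .inr ⟨x, c, hc, Nat.not_even_iff_odd.1 fun he => hnoH ⟨x, c, hc, he⟩,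
      hall, hedges⟩
  · push Not at hw
    have hverts : H.verts = {↑u, ↑v} := by
      refine (Set.insert_subset u.2 (Set.singleton_subset_iff.2 v.2)).antisymm' fun x hx => ?_
      by_cases hxu : (⟨x, hx⟩ : H.verts) = u
      exacts [.inl congr($hxu.1), .inr congr($(hw _ hxu).1)]
    exact .inr <| .inl ⟨u, v, Subtype.coe_ne_coe.2 huv.ne, hverts,
      H.edgeSet_eq_singleton_of_verts_eq_pair huv hverts⟩
end

section
/- Let C be a shortest odd cycle in a graph G, and let t be a vertex not on C with at least two neighbors on C. Then there exist two neighbors vᵢ, vⱼ of t on C such that the arc of C from vᵢ to vⱼ not containing any other neighbor of t on that side is odd, and minimality of C forces the complementary even arc to have length exactly 2. -/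
/-!
Split the odd cycle at the two given neighbours of `t`; one of the two arcs is odd. While an odd
arc between neighbours of `t` has a further neighbour of `t` in its interior, cutting it there
leaves a strictly shorter odd arc between neighbours of `t`. The final odd arc `P`, together with
`t`, forms an odd cycle of length `|P| + 2`, so minimality of `C` leaves at most two edges for the
complementary arc, which is even and nonempty.
-/

namespace SimpleGraph.Walk

variable {V : Type*} {G : SimpleGraph V}

theorem not_nil_of_odd_length {u v : V} {p : G.Walk u v} (h : Odd p.length) : ¬ p.Nil :=
  fun hp => Nat.not_odd_zero (length_eq_zero_iff.mpr hp ▸ h)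

/- `w.darts ~r c.darts` encodes that the closed walk `w` is `c` started at another vertex; an arc
decomposition of `c` is a pair `P`, `Q` with `(P.append Q).darts ~r c.darts`. -/
section DartsIsRotated

variable {u v : V} {c : G.Walk v v} {w : G.Walk u u}

theorem length_eq_of_darts_isRotated (h : w.darts ~r c.darts) : w.length = c.length := by
  simpa using h.perm.length_eq

theorem mem_edges_of_darts_isRotated (h : w.darts ~r c.darts) {e : Sym2 V} (he : e ∈ w.edges) :
    e ∈ c.edges :=
  (h.map Dart.edge).mem_iff.mp he

theorem mem_support_of_darts_isRotated (h : w.darts ~r c.darts) (hw : ¬ w.Nil) {x : V}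
    (hx : x ∈ w.support) : x ∈ c.support := by
  have hx' : x ∈ w.support.tail := by
    rcases (mem_support_iff w).mp hx with rfl | hx
    exacts [end_mem_tail_support hw, hx]
  rw [← map_snd_darts, (h.map _).mem_iff, map_snd_darts] at hx'
  exact List.mem_of_mem_tail hx'

theorem IsCycle.of_darts_isRotated (hc : c.IsCycle) (h : w.darts ~r c.darts) : w.IsCycle := by
  rw [isCycle_def, isTrail_def] at hc ⊢
  obtain ⟨hedges, hne, hsupp⟩ := hc
  refine ⟨(h.map Dart.edge).perm.nodup_iff.mpr hedges, fun hw => hne ?_, ?_⟩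
  · rw [eq_nil_iff_nil, ← length_eq_zero_iff, ← length_eq_of_darts_isRotated h, hw, length_nil]
  · rw [← map_snd_darts] at hsupp ⊢
    exact (h.map _).perm.nodup_iff.mpr hsupp

end DartsIsRotated

theorem exists_darts_isRotated_of_mem_support {v x y : V} {c : G.Walk v v}
    (hx : x ∈ c.support) (hy : y ∈ c.support) :
    ∃ (P : G.Walk x y) (Q : G.Walk y x), (P.append Q).darts ~r c.darts := by
  classical
  have hy' : y ∈ (c.rotate x hx).support := (mem_support_rotate_iff ..).mpr hy
  refine ⟨(c.rotate x hx).takeUntil y hy', (c.rotate x hx).dropUntil y hy', ?_⟩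
  rw [take_spec]
  exact rotate_darts c x hx

theorem exists_odd_arc_of_odd_length {v x y : V} {c : G.Walk v v} (hodd : Odd c.length)
    (hx : x ∈ c.support) (hy : y ∈ c.support) :
    ∃ p q, s(p, q) = s(x, y) ∧
      ∃ (P : G.Walk p q) (Q : G.Walk q p), Odd P.length ∧ (P.append Q).darts ~r c.darts := by
  obtain ⟨P, Q, h⟩ := exists_darts_isRotated_of_mem_support hx hy
  rw [← length_eq_of_darts_isRotated h, length_append] at hodd
  rcases Nat.even_or_odd P.length with hP | hP
  · refine ⟨y, x, Sym2.eq_swap, Q, P, (Nat.odd_add'.mp hodd).mpr hP, ?_⟩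
    rw [darts_append] at h ⊢
    exact List.isRotated_append.trans h
  · exact ⟨x, y, rfl, P, Q, hP, h⟩

theorem IsSubwalk.exists_darts_isRotated {p q p' q' : V} {P' : G.Walk p' q'} {P : G.Walk p q}
    (h : P'.IsSubwalk P) (Q : G.Walk q p) :
    ∃ Q' : G.Walk q' p', (P'.append Q').darts ~r (P.append Q).darts := by
  obtain ⟨ru, rv, rfl⟩ := h
  refine ⟨rv.append (Q.append ru), ?_⟩
  simpa [darts_append] using
    (List.isRotated_append (l := P'.darts ++ rv.darts ++ Q.darts) (l' := ru.darts))

theorem exists_odd_isSubwalk_interior_notMem (S : Set V) {p q : V} (P : G.Walk p q)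
    (hp : p ∈ S) (hq : q ∈ S) (hP : Odd P.length) :
    ∃ (p' q' : V) (P' : G.Walk p' q'), P'.IsSubwalk P ∧ p' ∈ S ∧ q' ∈ S ∧ Odd P'.length ∧
      ∀ z ∈ P'.support, z ≠ p' → z ≠ q' → z ∉ S := by
  classical
  by_cases hint : ∃ z ∈ P.support, z ≠ p ∧ z ≠ q ∧ z ∈ S
  · obtain ⟨z, hz, hzp, hzq, hzS⟩ := hint
    rw [← take_spec P hz, length_append] at hP
    rcases Nat.even_or_odd (P.takeUntil z hz).length with hfst | hfst
    · have : (P.dropUntil z hz).length < P.length := length_dropUntil_lt_length hz hzp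
      obtain ⟨p', q', P', hsub, h⟩ := exists_odd_isSubwalk_interior_notMem S (P.dropUntil z hz)
        hzS hq ((Nat.odd_add'.mp hP).mpr hfst)
      exact ⟨p', q', P', hsub.trans (isSubwalk_dropUntil P hz), h⟩
    · have : (P.takeUntil z hz).length < P.length := length_takeUntil_lt_length hz hzq
      obtain ⟨p', q', P', hsub, h⟩ := exists_odd_isSubwalk_interior_notMem S (P.takeUntil z hz)
        hp hzS hfst
      exact ⟨p', q', P', hsub.trans (isSubwalk_takeUntil P hz), h⟩
  · push Not at hint
    exact ⟨p, q, P, isSubwalk_rfl P, hp, hq, hP, hint⟩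
termination_by P.length

theorem IsCycle.exists_odd_arc_interior_notMem {v x y : V} {c : G.Walk v v} (hc : c.IsCycle)
    (hodd : Odd c.length) (S : Set V) (hx : x ∈ c.support) (hy : y ∈ c.support)
    (hxS : x ∈ S) (hyS : y ∈ S) (hxy : x ≠ y) :
    ∃ p q, p ∈ S ∧ q ∈ S ∧ ∃ (P : G.Walk p q) (Q : G.Walk q p), P.IsPath ∧ Q.IsPath ∧
      (P.append Q).darts ~r c.darts ∧ Odd P.length ∧ ∀ z ∈ P.support, z ≠ p → z ≠ q → z ∉ S := by
  obtain ⟨p, q, hpq, P, Q, hPodd, hrot⟩ := exists_odd_arc_of_odd_length hodd hx hy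
  obtain ⟨hpS, hqS, hne⟩ : p ∈ S ∧ q ∈ S ∧ p ≠ q := by
    rcases Sym2.eq_iff.mp hpq with ⟨rfl, rfl⟩ | ⟨rfl, rfl⟩
    exacts [⟨hxS, hyS, hxy⟩, ⟨hyS, hxS, hxy.symm⟩]
  have hP : P.IsPath :=
    (hc.of_darts_isRotated hrot).isPath_of_append_left (not_nil_of_ne hne.symm)
  obtain ⟨p', q', P', hsub, hp'S, hq'S, hP'odd, hint⟩ :=
    exists_odd_isSubwalk_interior_notMem S P hpS hqS hPodd
  obtain ⟨Q', hrot'⟩ := hsub.exists_darts_isRotated Q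
  have hcyc := hc.of_darts_isRotated (hrot'.trans hrot)
  exact ⟨p', q', hp'S, hq'S, P', Q', isPath_of_isSubwalk hsub hP,
    hcyc.isPath_of_append_right (not_nil_of_odd_length hP'odd), hrot'.trans hrot, hP'odd, hint⟩

theorem IsPath.isCycle_cons_cons {t p q : V} {P : G.Walk p q} (hP : P.IsPath) (hpq : p ≠ q)
    (htP : t ∉ P.support) (htp : G.Adj t p) (hqt : G.Adj q t) :
    (cons hqt (cons htp P)).IsCycle := by
  rw [cons_isCycle_iff, edges_cons, List.mem_cons, not_or, Sym2.eq_iff]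
  refine ⟨hP.cons htP, ?_, fun h => htP (P.snd_mem_support_of_mem_edges h)⟩
  rintro (⟨rfl, rfl⟩ | ⟨rfl, -⟩) <;> exact hpq rfl

end SimpleGraph.Walk

open SimpleGraph.Walk in
/-- For a shortest odd cycle `C` and a vertex `t ∉ C` with at least two
neighbors on `C`, there are neighbors `p, q` of `t` on `C` such that the arc
of `C` from `p` to `q` containing no other neighbor of `t` is odd, and the
complementary even arc has length exactly 2. -/
theorem shortest_odd_cycle_neighbor_arcs {V : Type*} (G : SimpleGraph V) (v : V)
    (c : G.Walk v v) (hc : c.IsCycle) (hodd : Odd c.length)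
    (hmin : ∀ (w : V) (c' : G.Walk w w), c'.IsCycle → Odd c'.length → c.length ≤ c'.length)
    (t : V) (ht : t ∉ c.support)
    (hnb : ∃ x y, x ≠ y ∧ x ∈ c.support ∧ y ∈ c.support ∧ G.Adj t x ∧ G.Adj t y) :
    ∃ p q : V, p ≠ q ∧ p ∈ c.support ∧ q ∈ c.support ∧ G.Adj t p ∧ G.Adj t q ∧
      ∃ (P : G.Walk p q) (Q : G.Walk q p), P.IsPath ∧ Q.IsPath ∧
        (∀ e ∈ P.edges, e ∈ c.edges) ∧ (∀ e ∈ Q.edges, e ∈ c.edges) ∧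
        P.length + Q.length = c.length ∧
        Odd P.length ∧ (∀ x ∈ P.support, x ≠ p → x ≠ q → ¬ G.Adj t x) ∧
        Even Q.length ∧ Q.length = 2 := by
  obtain ⟨x, y, hxy, hx, hy, htx, hty⟩ := hnb
  obtain ⟨p, q, htp, htq, P, Q, hP, hQ, hrot, hPodd, hint⟩ :=
    hc.exists_odd_arc_interior_notMem hodd {z | G.Adj t z} hx hy htx hty hxy
  have hW : ¬ (P.append Q).Nil := (hc.of_darts_isRotated hrot).not_nil
  have hsupp : ∀ z ∈ P.support, z ∈ c.support := fun z hz =>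
    mem_support_of_darts_isRotated hrot hW ((mem_support_append_iff P Q).mpr (.inl hz))
  have hpq : p ≠ q := hP.nil_iff_eq.not.mp (not_nil_of_odd_length hPodd)
  have hlen : P.length + Q.length = c.length := by
    rw [← length_append, length_eq_of_darts_isRotated hrot]
  have hQeven : Even Q.length := (Nat.odd_add.mp (hlen ▸ hodd)).mp hPodd
  have hQpos : Q.length ≠ 0 := fun h => hpq (eq_of_length_eq_zero h).symm
  have hshort := hmin q _ (hP.isCycle_cons_cons hpq (fun h => ht (hsupp t h)) htp htq.symm)
    (by rw [length_cons, length_cons, add_assoc]; exact hPodd.add_even even_two)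
  refine ⟨p, q, hpq, hsupp p P.start_mem_support, hsupp q P.end_mem_support, htp, htq, P, Q,
    hP, hQ, fun e he => mem_edges_of_darts_isRotated hrot (by simp [edges_append, he]),
    fun e he => mem_edges_of_darts_isRotated hrot (by simp [edges_append, he]), hlen, hPodd,
    hint, hQeven, ?_⟩
  obtain ⟨k, hk⟩ := hQeven
  simp only [length_cons] at hshort
  omega
end
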